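/- For every Le-diagram, if a vertex t_r of G(D) has faces F_a (NE), F_b (SW), F_c (NW), F_r (SE) around it as in the standard local picture, then the face-label sets satisfy: F_r determines morphisms λ^(r) →^0 λ^(a), λ^(r) →^0 λ^(b), and an injective morphism λ^(c) ⇒^1 λ^(r) of the associated Young diagrams. In particular λ^(r) is obtained from λ^(c) by adding the hook H(i^(r), j^(r)) around it. -/
import Mathlib


def IsYoungRows (k m : ℕ) (lam : ℕ → ℕ) : Prop :=
  (∀ i j, 1 ≤ i → i ≤ j → lam j ≤ lam i) ∧ (∀ i, lam i ≤ m) ∧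
    (∀ i, k < i → lam i = 0) ∧ lam 0 = 0

def InShape (lam : ℕ → ℕ) (p : ℕ × ℕ) : Prop :=
  1 ≤ p.1 ∧ 1 ≤ p.2 ∧ p.2 ≤ lam p.1

def IsLeDiagram (k m : ℕ) (lam : ℕ → ℕ) (dots : Finset (ℕ × ℕ)) : Prop :=
  IsYoungRows k m lam ∧ (∀ p ∈ dots, InShape lam p) ∧
    ∀ i j i' j' : ℕ, (i', j) ∈ dots → (i, j') ∈ dots → i' < i → j' < j →
      InShape lam (i, j) → (i, j) ∈ dots

def IsYD (μ : Finset (ℕ × ℕ)) : Prop :=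
  ∀ p ∈ μ, 1 ≤ p.1 ∧ 1 ≤ p.2 ∧
    ∀ q : ℕ × ℕ, 1 ≤ q.1 → 1 ≤ q.2 → q.1 ≤ p.1 → q.2 ≤ p.2 → q ∈ μ

def Hook (a b : ℕ) : Finset (ℕ × ℕ) :=
  ((Finset.Icc 1 a).image fun j => ((1 : ℕ), j)) ∪
    ((Finset.Icc 1 b).image fun i => (i, (1 : ℕ)))

def shiftF (p : ℕ) (ν : Finset (ℕ × ℕ)) : Finset (ℕ × ℕ) :=
  ν.image fun q => (q.1 + p, q.2 + p)

def IsOrderIdeal (S μ : Finset (ℕ × ℕ)) : Prop := S ⊆ μ ∧ IsYD (μ \ S)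

def Mor (p : ℕ) (lam mu : Finset (ℕ × ℕ)) : Prop :=
  IsOrderIdeal (shiftF p lam ∩ mu) mu

def InjMor (p : ℕ) (lam mu : Finset (ℕ × ℕ)) : Prop :=
  shiftF p lam ⊆ mu ∧ Mor p lam mu

def NWbox (dots : Finset (ℕ × ℕ)) (p : ℕ × ℕ) : ℕ × ℕ :=
  ((dots.filter fun q => q.1 < p.1 ∧ q.2 < p.2).sup Prod.fst,
   (dots.filter fun q => q.1 < p.1 ∧ q.2 < p.2).sup Prod.snd)

def NWiter (dots : Finset (ℕ × ℕ)) (l : ℕ) (p : ℕ × ℕ) : ℕ × ℕ :=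
  (NWbox dots)^[l] p

/-- The Young diagram `λ^{(r)}` of the dot at box `p`: the disjoint union of
the shifted hooks given by the chain of strictly-northwest dots starting at
`p`; the hook at level `l` has arm the column coordinate and leg the row
coordinate of `NW^l(p)`. -/
def lamOf (dots : Finset (ℕ × ℕ)) (p : ℕ × ℕ) : Finset (ℕ × ℕ) :=
  (Finset.range (p.1 + 1)).biUnion fun l =>
    shiftF l (Hook (NWiter dots l p).2 (NWiter dots l p).1)

def AdjCell (lam : ℕ → ℕ) (dots : Finset (ℕ × ℕ)) (c c' : ℕ × ℕ) : Prop :=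
  InShape lam c ∧ InShape lam c' ∧
    ((c' = (c.1, c.2 + 1) ∧ ¬ ∃ a, (a, c.2 + 1) ∈ dots ∧ a ≤ c.1) ∨
     (c' = (c.1 + 1, c.2) ∧ ¬ ∃ b, (c.1 + 1, b) ∈ dots ∧ b ≤ c.2))

def SameFace (lam : ℕ → ℕ) (dots : Finset (ℕ × ℕ)) (c c' : ℕ × ℕ) : Prop :=
  Relation.ReflTransGen
    (fun x y => AdjCell lam dots x y ∨ AdjCell lam dots y x) c c'

namespace Stmt12Aux

open Finset

lemma mem_Hook {a b : ℕ} {x : ℕ × ℕ} :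
    x ∈ Hook a b ↔ (x.1 = 1 ∧ 1 ≤ x.2 ∧ x.2 ≤ a) ∨ (x.2 = 1 ∧ 1 ≤ x.1 ∧ x.1 ≤ b) := by
  rcases x with ⟨u, v⟩
  simp only [Hook, Finset.mem_union, Finset.mem_image, Finset.mem_Icc, Prod.ext_iff]
  constructor
  · rintro (⟨j, ⟨h1, h2⟩, h3, h4⟩ | ⟨i, ⟨h1, h2⟩, h3, h4⟩) <;> simp_all <;> omega
  · rintro (⟨h1, h2, h3⟩ | ⟨h1, h2, h3⟩)
    · exact Or.inl ⟨v, ⟨h2, h3⟩, h1.symm, rfl⟩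
    · exact Or.inr ⟨u, ⟨h2, h3⟩, rfl, h1.symm⟩

lemma mem_shiftF {p : ℕ} {ν : Finset (ℕ × ℕ)} {x : ℕ × ℕ} :
    x ∈ shiftF p ν ↔ ∃ y ∈ ν, (y.1 + p, y.2 + p) = x := by
  simp [shiftF, Finset.mem_image]

lemma shiftF_shiftF (a b : ℕ) (ν : Finset (ℕ × ℕ)) :
    shiftF a (shiftF b ν) = shiftF (b + a) ν := by
  ext x
  simp only [mem_shiftF]
  constructor
  · rintro ⟨y, ⟨z, hz, rfl⟩, rfl⟩
    exact ⟨z, hz, by simp [add_assoc]⟩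
  · rintro ⟨z, hz, rfl⟩
    exact ⟨(z.1 + b, z.2 + b), ⟨z, hz, rfl⟩, by simp [add_assoc]⟩

lemma shiftF_zero (ν : Finset (ℕ × ℕ)) : shiftF 0 ν = ν := by
  ext x; simp [mem_shiftF]

lemma shiftF_mono {p : ℕ} {ν μ : Finset (ℕ × ℕ)} (h : ν ⊆ μ) :
    shiftF p ν ⊆ shiftF p μ := Finset.image_subset_image h

variable {dots : Finset (ℕ × ℕ)}

lemma NWbox_fst_le (p : ℕ × ℕ) : (NWbox dots p).1 ≤ p.1 - 1 := by
  apply Finset.sup_le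
  intro q hq
  have := (Finset.mem_filter.1 hq).2.1
  omega

lemma NWbox_snd_le (p : ℕ × ℕ) : (NWbox dots p).2 ≤ p.2 - 1 := by
  apply Finset.sup_le
  intro q hq
  have := (Finset.mem_filter.1 hq).2.2
  omega

lemma NWbox_mono {p q : ℕ × ℕ} (h1 : p.1 ≤ q.1) (h2 : p.2 ≤ q.2) :
    (NWbox dots p).1 ≤ (NWbox dots q).1 ∧ (NWbox dots p).2 ≤ (NWbox dots q).2 := by
  have hsub : dots.filter (fun r => r.1 < p.1 ∧ r.2 < p.2) ⊆
      dots.filter (fun r => r.1 < q.1 ∧ r.2 < q.2) := by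
    intro r hr
    rw [Finset.mem_filter] at hr ⊢
    exact ⟨hr.1, by omega, by omega⟩
  exact ⟨Finset.sup_mono hsub, Finset.sup_mono hsub⟩

lemma NWiter_succ (l : ℕ) (p : ℕ × ℕ) :
    NWiter dots (l + 1) p = NWiter dots l (NWbox dots p) := by
  simp [NWiter, Function.iterate_succ_apply]

lemma NWiter_succ' (l : ℕ) (p : ℕ × ℕ) :
    NWiter dots (l + 1) p = NWbox dots (NWiter dots l p) := by
  simp [NWiter, Function.iterate_succ_apply']

lemma NWiter_zero (p : ℕ × ℕ) : NWiter dots 0 p = p := rfl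

lemma NWiter_mono {p q : ℕ × ℕ} (h1 : p.1 ≤ q.1) (h2 : p.2 ≤ q.2) (l : ℕ) :
    (NWiter dots l p).1 ≤ (NWiter dots l q).1 ∧
      (NWiter dots l p).2 ≤ (NWiter dots l q).2 := by
  induction l with
  | zero => exact ⟨h1, h2⟩
  | succ n ih =>
    rw [NWiter_succ', NWiter_succ']
    exact NWbox_mono ih.1 ih.2

lemma NWiter_fst_le (p : ℕ × ℕ) (l : ℕ) : (NWiter dots l p).1 ≤ p.1 - l := by
  induction l with
  | zero => simp [NWiter_zero]
  | succ n ih =>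
    rw [NWiter_succ']
    have := NWbox_fst_le (dots := dots) (NWiter dots n p)
    omega

variable (hpos : ∀ p ∈ dots, 1 ≤ p.1 ∧ 1 ≤ p.2)
include hpos

lemma NWbox_fst_zero {p : ℕ × ℕ} (h : (NWbox dots p).1 = 0) :
    NWbox dots p = (0, 0) := by
  have hemp : dots.filter (fun r => r.1 < p.1 ∧ r.2 < p.2) = ∅ := by
    by_contra hne
    obtain ⟨q, hq⟩ := Finset.nonempty_iff_ne_empty.2 hne
    have hq1 := (hpos q (Finset.mem_filter.1 hq).1).1
    have : q.1 ≤ (NWbox dots p).1 := Finset.le_sup hq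
    omega
  simp [NWbox, hemp]

lemma NWiter_vanish {p : ℕ × ℕ} {l : ℕ} (h : p.1 < l) :
    NWiter dots l p = (0, 0) := by
  cases l with
  | zero => omega
  | succ n =>
    rw [NWiter_succ']
    apply NWbox_fst_zero hpos
    have h1 := NWiter_fst_le (dots := dots) p (n + 1)
    have h2 := NWbox_fst_le (dots := dots) (NWiter dots n p)
    rw [NWiter_succ'] at h1
    omega

lemma mem_lamOf {p : ℕ × ℕ} {x : ℕ × ℕ} :
    x ∈ lamOf dots p ↔
      ∃ l, x ∈ shiftF l (Hook (NWiter dots l p).2 (NWiter dots l p).1) := by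
  constructor
  · intro hx
    obtain ⟨l, _, hl⟩ := Finset.mem_biUnion.1 hx
    exact ⟨l, hl⟩
  · rintro ⟨l, hl⟩
    rcases le_or_gt l p.1 with h | h
    · exact Finset.mem_biUnion.2 ⟨l, Finset.mem_range.2 (by omega), hl⟩
    · exfalso
      rw [NWiter_vanish hpos h] at hl
      obtain ⟨y, hy, _⟩ := mem_shiftF.1 hl
      rcases mem_Hook.1 hy with ⟨_, h2, h3⟩ | ⟨_, h2, h3⟩ <;> omega

lemma lamOf_pos {p : ℕ × ℕ} {x : ℕ × ℕ} (hx : x ∈ lamOf dots p) :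
    1 ≤ x.1 ∧ 1 ≤ x.2 := by
  obtain ⟨l, hl⟩ := (mem_lamOf hpos).1 hx
  obtain ⟨y, hy, rfl⟩ := mem_shiftF.1 hl
  rcases mem_Hook.1 hy with ⟨h1, h2, _⟩ | ⟨h1, h2, _⟩ <;> simp <;> omega

lemma lamOf_mono {p q : ℕ × ℕ} (h1 : p.1 ≤ q.1) (h2 : p.2 ≤ q.2) :
    lamOf dots p ⊆ lamOf dots q := by
  intro x hx
  obtain ⟨l, hl⟩ := (mem_lamOf hpos).1 hx
  refine (mem_lamOf hpos).2 ⟨l, ?_⟩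
  obtain ⟨y, hy, rfl⟩ := mem_shiftF.1 hl
  refine mem_shiftF.2 ⟨y, ?_, rfl⟩
  have hm := NWiter_mono (dots := dots) h1 h2 l
  rcases mem_Hook.1 hy with ⟨g1, g2, g3⟩ | ⟨g1, g2, g3⟩
  · exact mem_Hook.2 (Or.inl ⟨g1, g2, by omega⟩)
  · exact mem_Hook.2 (Or.inr ⟨g1, g2, by omega⟩)

lemma lamOf_split (p : ℕ × ℕ) :
    lamOf dots p = Hook p.2 p.1 ∪ shiftF 1 (lamOf dots (NWbox dots p)) := by
  ext x
  rw [mem_lamOf hpos, Finset.mem_union]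
  constructor
  · rintro ⟨l, hl⟩
    cases l with
    | zero =>
      left
      rw [NWiter_zero, shiftF_zero] at hl
      exact hl
    | succ n =>
      right
      rw [NWiter_succ, ← shiftF_shiftF 1 n] at hl
      obtain ⟨y, hy, rfl⟩ := mem_shiftF.1 hl
      exact mem_shiftF.2 ⟨y, (mem_lamOf hpos).2 ⟨n, hy⟩, rfl⟩
  · rintro (h | h)
    · exact ⟨0, by rw [NWiter_zero, shiftF_zero]; exact h⟩
    · obtain ⟨y, hy, rfl⟩ := mem_shiftF.1 h
      obtain ⟨n, hn⟩ := (mem_lamOf hpos).1 hy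
      refine ⟨n + 1, ?_⟩
      rw [NWiter_succ, ← shiftF_shiftF 1 n]
      exact mem_shiftF.2 ⟨y, hn, rfl⟩

lemma disjoint_hook_shift (a b : ℕ) (p : ℕ × ℕ) :
    Disjoint (Hook a b) (shiftF 1 (lamOf dots p)) := by
  rw [Finset.disjoint_left]
  intro x hx hx'
  obtain ⟨y, hy, rfl⟩ := mem_shiftF.1 hx'
  have := lamOf_pos hpos hy
  rcases mem_Hook.1 hx with ⟨h1, _, _⟩ | ⟨h1, _, _⟩ <;> simp at h1 <;> omega

omit hpos

lemma isYD_Hook (a b : ℕ) : IsYD (Hook a b) := by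
  intro p hp
  rcases mem_Hook.1 hp with ⟨h1, h2, h3⟩ | ⟨h1, h2, h3⟩
  · refine ⟨by omega, by omega, fun q hq1 hq2 hq3 hq4 => ?_⟩
    exact mem_Hook.2 (Or.inl ⟨by omega, hq2, by omega⟩)
  · refine ⟨by omega, by omega, fun q hq1 hq2 hq3 hq4 => ?_⟩
    exact mem_Hook.2 (Or.inr ⟨by omega, hq1, by omega⟩)

/-- The face-label invariant: `NWbox dots (c.1+1, c.2+1)` is invariant along
face adjacency. -/
lemma adj_invariant {lam : ℕ → ℕ} {c c' : ℕ × ℕ}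
    (h : AdjCell lam dots c c') :
    NWbox dots (c.1 + 1, c.2 + 1) = NWbox dots (c'.1 + 1, c'.2 + 1) := by
  obtain ⟨-, -, ⟨hc', hside⟩ | ⟨hc', hside⟩⟩ := h
  · subst hc'
    have hfil : dots.filter (fun r => r.1 < c.1 + 1 ∧ r.2 < c.2 + 1) =
        dots.filter (fun r => r.1 < c.1 + 1 ∧ r.2 < c.2 + 1 + 1) := by
      apply Finset.filter_congr
      intro q hq
      constructor
      · rintro ⟨u, v⟩; exact ⟨u, by omega⟩
      · rintro ⟨u, v⟩
        refine ⟨u, ?_⟩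
        rcases Nat.lt_succ_iff_lt_or_eq.1 v with h | h
        · exact h
        · exfalso
          exact hside ⟨q.1, by rw [← h]; exact hq, by omega⟩
    simp only [NWbox, hfil]
  · subst hc'
    have hfil : dots.filter (fun r => r.1 < c.1 + 1 ∧ r.2 < c.2 + 1) =
        dots.filter (fun r => r.1 < c.1 + 1 + 1 ∧ r.2 < c.2 + 1) := by
      apply Finset.filter_congr
      intro q hq
      constructor
      · rintro ⟨u, v⟩; exact ⟨by omega, v⟩
      · rintro ⟨u, v⟩
        refine ⟨?_, v⟩
        rcases Nat.lt_succ_iff_lt_or_eq.1 u with h | h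
        · exact h
        · exfalso
          exact hside ⟨q.2, by rw [← h]; exact hq, by omega⟩
    simp only [NWbox, hfil]

lemma NWbox_dot {d : ℕ × ℕ} (hd : d ∈ dots) :
    NWbox dots (d.1 + 1, d.2 + 1) = d := by
  have hmem : d ∈ dots.filter (fun r => r.1 < d.1 + 1 ∧ r.2 < d.2 + 1) :=
    Finset.mem_filter.2 ⟨hd, by omega, by omega⟩
  have h1 : (dots.filter (fun r => r.1 < d.1 + 1 ∧ r.2 < d.2 + 1)).sup Prod.fst = d.1 := by
    apply le_antisymm
    · exact Finset.sup_le fun q hq => by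
        have := (Finset.mem_filter.1 hq).2.1; omega
    · exact Finset.le_sup hmem
  have h2 : (dots.filter (fun r => r.1 < d.1 + 1 ∧ r.2 < d.2 + 1)).sup Prod.snd = d.2 := by
    apply le_antisymm
    · exact Finset.sup_le fun q hq => by
        have := (Finset.mem_filter.1 hq).2.2; omega
    · exact Finset.le_sup hmem
  rw [NWbox]
  exact Prod.ext h1 h2

lemma face_label {lam : ℕ → ℕ} {d c : ℕ × ℕ} (hd : d ∈ dots)
    (h : SameFace lam dots d c) :
    d = NWbox dots (c.1 + 1, c.2 + 1) := by
  have key : NWbox dots (d.1 + 1, d.2 + 1) = NWbox dots (c.1 + 1, c.2 + 1) := by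
    induction h with
    | refl => rfl
    | tail _ hstep ih =>
      rcases hstep with hstep | hstep
      · exact ih.trans (adj_invariant hstep)
      · exact ih.trans (adj_invariant hstep).symm
  rw [← key, NWbox_dot hd]


lemma mor_zero_of_subset {lamS mu : Finset (ℕ × ℕ)} (h : mu ⊆ lamS) :
    Mor 0 lamS mu := by
  unfold Mor IsOrderIdeal
  rw [shiftF_zero, Finset.inter_eq_right.mpr h]
  refine ⟨Finset.Subset.refl _, fun p hp => absurd hp (by simp)⟩

end Stmt12Aux

open Stmt12Aux in
/-- let `t_r` be a dot of a Le-diagram at box `(i,j)`, with the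
four faces around it `F_a` (NE, the face of the box `(i-1,j)`), `F_b` (SW, the
face of `(i,j-1)`), `F_c` (NW, the face of `(i-1,j-1)`) and `F_r` (SE, the
face of `(i,j)` itself), the faces `F_a, F_b, F_c` having northwest-corner
dots `da, db, dc`.  Then there are morphisms `λ^{(r)} →⁰ λ^{(a)}`,
`λ^{(r)} →⁰ λ^{(b)}`, an injective morphism `λ^{(c)} ⇒¹ λ^{(r)}`, and
`λ^{(r)}` is obtained from `λ^{(c)}` by adding the hook `H` of the box `(i,j)`
(arm `j`, leg `i`) around it. -/

theorem stmt12 (k m : ℕ) (lam : ℕ → ℕ) (dots : Finset (ℕ × ℕ))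
    (hLe : IsLeDiagram k m lam dots)
    (i j : ℕ) (hd : (i, j) ∈ dots)
    (da db dc : ℕ × ℕ) (hda : da ∈ dots) (hdb : db ∈ dots) (hdc : dc ∈ dots)
    (hFa : SameFace lam dots da (i - 1, j))
    (hFb : SameFace lam dots db (i, j - 1))
    (hFc : SameFace lam dots dc (i - 1, j - 1)) :
    Mor 0 (lamOf dots (i, j)) (lamOf dots da) ∧
    Mor 0 (lamOf dots (i, j)) (lamOf dots db) ∧
    InjMor 1 (lamOf dots dc) (lamOf dots (i, j)) ∧
    lamOf dots (i, j) = Hook j i ∪ shiftF 1 (lamOf dots dc) ∧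
    Disjoint (Hook j i) (shiftF 1 (lamOf dots dc)) := by
  obtain ⟨hYR, hIn, hExch⟩ := hLe
  have hpos : ∀ p ∈ dots, 1 ≤ p.1 ∧ 1 ≤ p.2 :=
    fun p hp => ⟨(hIn p hp).1, (hIn p hp).2.1⟩
  have hi : 1 ≤ i := (hpos _ hd).1
  have hj : 1 ≤ j := (hpos _ hd).2
  have hia : i - 1 + 1 = i := by omega
  have hja : j - 1 + 1 = j := by omega
  have hda' : da = NWbox dots (i, j + 1) := by
    have := face_label hda hFa
    simpa [hia] using this
  have hdb' : db = NWbox dots (i + 1, j) := by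
    have := face_label hdb hFb
    simpa [hja] using this
  have hdc' : dc = NWbox dots (i, j) := by
    have := face_label hdc hFc
    simpa [hia, hja] using this
  have hsubA : lamOf dots da ⊆ lamOf dots (i, j) := by
    rw [hda']
    have h1 := NWbox_fst_le (dots := dots) (i, j + 1)
    have h2 := NWbox_snd_le (dots := dots) (i, j + 1)
    exact lamOf_mono hpos (by simpa using by omega) (by simpa using by omega)
  have hsubB : lamOf dots db ⊆ lamOf dots (i, j) := by
    rw [hdb']
    have h1 := NWbox_fst_le (dots := dots) (i + 1, j)
    have h2 := NWbox_snd_le (dots := dots) (i + 1, j)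
    exact lamOf_mono hpos (by simpa using by omega) (by simpa using by omega)
  have hsplit : lamOf dots (i, j) = Hook j i ∪ shiftF 1 (lamOf dots dc) := by
    rw [hdc']
    simpa using lamOf_split hpos (i, j)
  have hdisj : Disjoint (Hook j i) (shiftF 1 (lamOf dots dc)) :=
    disjoint_hook_shift hpos j i dc
  refine ⟨mor_zero_of_subset hsubA, mor_zero_of_subset hsubB, ?_, hsplit, hdisj⟩
  refine ⟨by rw [hsplit]; exact Finset.subset_union_right, ?_, ?_⟩
  · exact Finset.inter_subset_right
  · have hdl := Finset.disjoint_left.1 hdisj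
    have hdiff : lamOf dots (i, j) \
        (shiftF 1 (lamOf dots dc) ∩ lamOf dots (i, j)) = Hook j i := by
      ext x
      simp only [Finset.mem_sdiff, Finset.mem_inter, hsplit, Finset.mem_union]
      constructor
      · rintro ⟨h1 | h1, h2⟩
        · exact h1
        · exact absurd ⟨h1, Or.inr h1⟩ h2
      · intro hx
        exact ⟨Or.inl hx, fun hc => hdl hx hc.1⟩
    rw [hdiff]
    exact isYD_Hook j i
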